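/- Let GeLU(x) = x·Φ(x) with Φ the standard normal cumulative distribution function, and let ReLU(x) = max(x, 0), both applied entrywise to vectors. Let W₁ be a real h × d₁ matrix and W₂ a real d₂ × h matrix, and let g : ℝ^{d₁} → ℝ^{d₂} be the two-layer ReLU network g(x) = W₂ · ReLU(W₁ · x). Then for every ε ∈ (0,1) there exists λ > 0 such that the two-layer GeLU network f(x) = (1/λ)·W₂ · GeLU(λ·W₁ · x) satisfies ‖f(x) − g(x)‖₂ ≤ ε for every x ∈ ℝ^{d₁}. -/

import Mathlib

/-!
Since `Φ(t) + Φ(-t) = 1`, the error `GeLU t - ReLU t` is an even function of `t`, and for `t ≤ 0`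
the Gaussian tail bound `-t ∫_{-∞}^t e^{-u²/2} du ≤ ∫_{-∞}^t -u e^{-u²/2} du = e^{-t²/2}` gives
`|GeLU t - ReLU t| ≤ 1/√(2π)`. As ReLU is positively homogeneous, `t ↦ GeLU(λt)/λ` is within
`1/(λ√(2π))` of ReLU uniformly, and a matrix `W₂` amplifies a uniform error `δ` by at most
`√(∑ᵢ (∑ⱼ |W₂ᵢⱼ|)²)` in the Euclidean norm; taking `λ` large makes the product at most `ε`.
-/

open MeasureTheory Real Set Filter

noncomputable def stdNormalCDF (x : ℝ) : ℝ :=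
  (1 / Real.sqrt (2 * Real.pi)) * ∫ t in Set.Iic x, Real.exp (-(t ^ 2) / 2)

noncomputable def gelu (x : ℝ) : ℝ := x * stdNormalCDF x

def relu (x : ℝ) : ℝ := max x 0

lemma integrable_exp_neg_sq_div_two : Integrable (fun t : ℝ => exp (-(t ^ 2) / 2)) := by
  convert integrable_exp_neg_mul_sq (by norm_num : (0 : ℝ) < 1 / 2) using 2 with t
  ring_nf

lemma integrable_neg_mul_exp_neg_sq_div_two :
    Integrable (fun t : ℝ => -t * exp (-(t ^ 2) / 2)) := by
  convert (integrable_mul_exp_neg_mul_sq (by norm_num : (0 : ℝ) < 1 / 2)).neg using 2 with t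
  simp only [Pi.neg_apply]
  ring_nf

lemma integral_exp_neg_sq_div_two : ∫ t : ℝ, exp (-(t ^ 2) / 2) = √(2 * π) := by
  convert integral_gaussian (1 / 2) using 2 with t <;> ring_nf

lemma tendsto_exp_neg_sq_div_two_atBot :
    Tendsto (fun t : ℝ => exp (-(t ^ 2) / 2)) atBot (nhds 0) := by
  have hsq : Tendsto (fun t : ℝ => t ^ 2) atBot atTop :=
    (tendsto_id.atBot_mul_atBot₀ tendsto_id).congr fun t => (sq t).symm
  exact tendsto_exp_atBot.comp ((tendsto_neg_atTop_atBot.comp hsq).atBot_div_const (by norm_num))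

lemma integral_Iic_neg_mul_exp_neg_sq_div_two (t : ℝ) :
    ∫ u in Iic t, -u * exp (-(u ^ 2) / 2) = exp (-(t ^ 2) / 2) := by
  have hderiv (u : ℝ) :
      HasDerivAt (fun v : ℝ => exp (-(v ^ 2) / 2)) (-u * exp (-(u ^ 2) / 2)) u := by
    have hexponent : HasDerivAt (fun v : ℝ => -(v ^ 2) / 2) (-u) u := by
      simpa using ((hasDerivAt_pow 2 u).neg.div_const 2).congr_deriv (by ring)
    simpa [mul_comm] using hexponent.exp
  simpa using integral_Iic_of_hasDerivAt_of_tendsto' (fun u _ => hderiv u)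
    integrable_neg_mul_exp_neg_sq_div_two.integrableOn tendsto_exp_neg_sq_div_two_atBot

lemma neg_mul_integral_Iic_exp_neg_sq_div_two_le (t : ℝ) :
    -t * ∫ u in Iic t, exp (-(u ^ 2) / 2) ≤ exp (-(t ^ 2) / 2) := by
  rw [← integral_const_mul, ← integral_Iic_neg_mul_exp_neg_sq_div_two t]
  refine setIntegral_mono_on (integrable_exp_neg_sq_div_two.integrableOn.const_mul _)
    integrable_neg_mul_exp_neg_sq_div_two.integrableOn measurableSet_Iic fun u hu => ?_
  have hu : u ≤ t := hu
  gcongr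

lemma stdNormalCDF_nonneg (t : ℝ) : 0 ≤ stdNormalCDF t :=
  mul_nonneg (by positivity) (integral_nonneg fun _ => (exp_pos _).le)

lemma stdNormalCDF_add_stdNormalCDF_neg (t : ℝ) : stdNormalCDF t + stdNormalCDF (-t) = 1 := by
  have hsplit := intervalIntegral.integral_Iic_add_Ioi (b := t)
    integrable_exp_neg_sq_div_two.integrableOn integrable_exp_neg_sq_div_two.integrableOn
  have hreflect : ∫ u in Iic (-t), exp (-(u ^ 2) / 2) = ∫ u in Ioi t, exp (-(u ^ 2) / 2) := by
    have := integral_comp_neg_Ioi t fun u : ℝ => exp (-(u ^ 2) / 2)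
    simp only [neg_sq] at this
    exact this.symm
  rw [stdNormalCDF, stdNormalCDF, hreflect, ← mul_add, hsplit, integral_exp_neg_sq_div_two]
  field_simp

lemma gelu_sub_relu_neg (t : ℝ) : gelu (-t) - relu (-t) = gelu t - relu t := by
  have hΦ := stdNormalCDF_add_stdNormalCDF_neg t
  have hrelu : relu (-t) = relu t - t := by
    simp only [relu]
    rcases le_total t 0 with h | h <;> simp [h]
  rw [hrelu, gelu, gelu]
  linear_combination (-t) * hΦ

lemma abs_gelu_sub_relu_le (t : ℝ) : |gelu t - relu t| ≤ 1 / √(2 * π) := by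
  wlog ht : t ≤ 0 generalizing t
  · simpa [gelu_sub_relu_neg] using this (-t) (by linarith)
  have hrelu : relu t = 0 := max_eq_right ht
  rw [hrelu, sub_zero, gelu, abs_mul, abs_of_nonpos ht, abs_of_nonneg (stdNormalCDF_nonneg t),
    stdNormalCDF, mul_left_comm]
  calc 1 / √(2 * π) * (-t * ∫ u in Iic t, exp (-(u ^ 2) / 2))
      ≤ 1 / √(2 * π) * exp (-(t ^ 2) / 2) := by
        gcongr; exact neg_mul_integral_Iic_exp_neg_sq_div_two_le t
    _ ≤ 1 / √(2 * π) * 1 := by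
        gcongr; exact exp_le_one_iff.mpr (by nlinarith [sq_nonneg t])
    _ = 1 / √(2 * π) := mul_one _

lemma relu_mul_of_nonneg {c : ℝ} (hc : 0 ≤ c) (y : ℝ) : relu (c * y) = c * relu y := by
  rw [relu, relu, mul_max_of_nonneg _ _ hc, mul_zero]

lemma abs_inv_mul_gelu_mul_sub_relu_le {lam : ℝ} (hlam : 0 < lam) (y : ℝ) :
    |(1 / lam) * gelu (lam * y) - relu y| ≤ 1 / √(2 * π) / lam := by
  have hrewrite : (1 / lam) * gelu (lam * y) - relu y
      = (gelu (lam * y) - relu (lam * y)) / lam := by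
    rw [relu_mul_of_nonneg hlam.le]
    field_simp
  rw [hrewrite, abs_div, abs_of_pos hlam]
  gcongr
  exact abs_gelu_sub_relu_le _

lemma sqrt_sum_sq_mulVec_le {m n : Type*} [Fintype m] [Fintype n] (A : Matrix m n ℝ)
    {w : n → ℝ} {δ : ℝ} (hδ : 0 ≤ δ) (hw : ∀ j, |w j| ≤ δ) :
    √(∑ i, A.mulVec w i ^ 2) ≤ δ * √(∑ i, (∑ j, |A i j|) ^ 2) := by
  have hrow (i : m) : |A.mulVec w i| ≤ δ * ∑ j, |A i j| := by
    calc |A.mulVec w i| ≤ ∑ j, |A i j| * |w j| := by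
          simpa only [Matrix.mulVec, dotProduct, abs_mul] using
            Finset.abs_sum_le_sum_abs (fun j => A i j * w j) Finset.univ
      _ ≤ ∑ j, |A i j| * δ := by gcongr with j; exact hw j
      _ = δ * ∑ j, |A i j| := by rw [← Finset.sum_mul, mul_comm]
  have hsum : ∑ i, A.mulVec w i ^ 2 ≤ δ ^ 2 * ∑ i, (∑ j, |A i j|) ^ 2 := by
    rw [Finset.mul_sum]
    gcongr with i
    rw [← sq_abs, ← mul_pow]
    exact pow_le_pow_left₀ (abs_nonneg _) (hrow i) 2
  calc √(∑ i, A.mulVec w i ^ 2) ≤ √(δ ^ 2 * ∑ i, (∑ j, |A i j|) ^ 2) := sqrt_le_sqrt hsum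
    _ = δ * √(∑ i, (∑ j, |A i j|) ^ 2) := by rw [sqrt_mul (sq_nonneg δ), sqrt_sq hδ]

/-- For a two-layer ReLU network `g(x) = W₂·ReLU(W₁·x)` and every `ε ∈ (0,1)`, there
exists `λ > 0` such that the two-layer GeLU network `f(x) = (1/λ)·W₂·GeLU(λ·W₁·x)`
satisfies `‖f(x) − g(x)‖₂ ≤ ε` for every `x ∈ ℝ^{d₁}`. -/
theorem gelu_network_approx_relu_network (d₁ h d₂ : ℕ)
    (W₁ : Matrix (Fin h) (Fin d₁) ℝ) (W₂ : Matrix (Fin d₂) (Fin h) ℝ)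
    (ε : ℝ) (hε : ε ∈ Set.Ioo (0 : ℝ) 1) :
    ∃ lam > (0 : ℝ), ∀ x : Fin d₁ → ℝ,
      Real.sqrt (∑ i : Fin d₂,
          ((1 / lam) * W₂.mulVec (fun j => gelu (lam * W₁.mulVec x j)) i
            - W₂.mulVec (fun j => relu (W₁.mulVec x j)) i) ^ 2) ≤ ε := by
  set C := 1 / √(2 * π) * √(∑ i, (∑ j, |W₂ i j|) ^ 2)
  have hε₀ : 0 < ε := hε.1
  set lam := 1 + C / ε
  have hlam : 0 < lam := by positivity
  refine ⟨lam, hlam, fun x => ?_⟩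
  have hnetwork (i : Fin d₂) : (1 / lam) * W₂.mulVec (fun j => gelu (lam * W₁.mulVec x j)) i
      - W₂.mulVec (fun j => relu (W₁.mulVec x j)) i
      = W₂.mulVec (fun j => (1 / lam) * gelu (lam * W₁.mulVec x j) - relu (W₁.mulVec x j)) i := by
    simp only [Matrix.mulVec, dotProduct, Finset.mul_sum, ← Finset.sum_sub_distrib]
    exact Finset.sum_congr rfl fun j _ => by ring
  calc _ ≤ 1 / √(2 * π) / lam * √(∑ i, (∑ j, |W₂ i j|) ^ 2) := by
        simp only [hnetwork]
        exact sqrt_sum_sq_mulVec_le W₂ (by positivity)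
          fun j => abs_inv_mul_gelu_mul_sub_relu_le hlam _
    _ = C / lam := by ring
    _ ≤ ε := by
        rw [div_le_iff₀ hlam]
        have : ε * lam = ε + C := by
          rw [mul_add, mul_div_cancel₀ _ hε₀.ne', mul_one]
        linarith
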